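/- arXiv:1701.03971 — 2 statements merged into one kernel-verified Lean document; each statement's English description precedes it below -/
import Mathlib

section
/- For all r > 0 and μ > 0, the inequality (S_μ(r)/ζ(2μ+1))^{1/(μ+1)} + ζ(2μ+3)·S_μ(r)/(ζ(2μ+1)·S_{μ+1}(r)) ≥ 2 holds. -/
/-!
Write `ν = n + 1`, `t = (1 + r²)⁻¹` and `e = ζ(2μ+3) - 1`. The Mathieu term factors as
`ν^{-(2μ+1)} · ρ(ν)` with `ρ(ν) = 2 (ν² / (ν² + r²))^{μ+1}` increasing, so `S_μ(r) ≥ ρ(1) ζ(2μ+1)`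
and the first summand is at least `2^{1/(μ+1)} t`. The summands of `S_{μ+1}(r)` carry the extra
decreasing factor `(ν² + r²)⁻¹`, so the weighted Chebyshev inequality (weights `ν^{-(2μ+1)}`) gives
`ζ(2μ+1) S_{μ+1}(r) ≤ S_μ(r) ∑ ν^{-(2μ+1)} (ν² + r²)⁻¹ ≤ S_μ(r) (t + e)`, hence the second summand
is at least `(1 + e) / (t + e)`. Finally `e ≤ 2^{-(2μ+1)} ≤ 1 / (2(μ+1)) ≤ 2^{1/(μ+1)} - 1`, and
`(1 + e) (t + (t + e)⁻¹) ≥ (1 + e) (2 - e) ≥ 2` by AM-GM.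
-/

open Real

noncomputable def mathieuS (μ r : ℝ) : ℝ :=
  ∑' n : ℕ, (2 * ((n : ℝ) + 1)) / ((((n : ℝ) + 1) ^ 2 + r ^ 2) ^ (μ + 1))

noncomputable def zetaR (s : ℝ) : ℝ := ∑' n : ℕ, ((n : ℝ) + 1) ^ (-s)

lemma one_add_mul_one_sub_inv_le_rpow {x t : ℝ} (hx : 0 < x) (ht : 0 ≤ t) :
    1 + t * (1 - x⁻¹) ≤ x ^ t := by
  rw [rpow_def_of_pos hx]
  nlinarith [add_one_le_exp (log x * t),
    mul_le_mul_of_nonneg_left (one_sub_inv_le_log_of_pos hx) ht]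

lemma two_le_one_add_mul_add_inv {e t : ℝ} (he₀ : 0 ≤ e) (he₁ : e ≤ 1) (ht : 0 < t) :
    2 ≤ (1 + e) * (t + (t + e)⁻¹) := by
  have hu : 0 < t + e := by linarith
  have hamgm : 2 ≤ (t + e) + (t + e)⁻¹ := by
    rw [← sub_nonneg]
    have : (t + e) + (t + e)⁻¹ - 2 = (t + e - 1) ^ 2 / (t + e) := by field_simp; ring
    rw [this]; positivity
  nlinarith

theorem AntivaryOn.sum_mul_sum_le_sum_mul_sum {ι : Type*} {s : Finset ι} {w f g : ι → ℝ}
    (hfg : AntivaryOn f g s) (hw : ∀ i ∈ s, 0 ≤ w i) :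
    (∑ i ∈ s, w i) * ∑ i ∈ s, w i * f i * g i ≤ (∑ i ∈ s, w i * f i) * ∑ i ∈ s, w i * g i := by
  set X : ι → ι → ℝ := fun i j => w i * (w j * f j * g j) - w i * f i * (w j * g j)
  have hsym : ∑ i ∈ s, ∑ j ∈ s, w i * w j * ((f j - f i) * (g j - g i)) =
      2 * ((∑ i ∈ s, w i) * ∑ i ∈ s, w i * f i * g i -
        (∑ i ∈ s, w i * f i) * ∑ i ∈ s, w i * g i) := calc
    _ = ∑ i ∈ s, ∑ j ∈ s, (X i j + X j i) :=
      Finset.sum_congr rfl fun i _ => Finset.sum_congr rfl fun j _ => by simp only [X]; ring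
    _ = 2 * ∑ i ∈ s, ∑ j ∈ s, X i j := by
      have hswap : ∑ i ∈ s, ∑ j ∈ s, X j i = ∑ i ∈ s, ∑ j ∈ s, X i j := Finset.sum_comm
      simp only [Finset.sum_add_distrib, hswap]
      ring
    _ = _ := by simp only [X, Finset.sum_sub_distrib, Finset.sum_mul_sum]
  have hneg : ∑ i ∈ s, ∑ j ∈ s, w i * w j * ((f j - f i) * (g j - g i)) ≤ 0 :=
    Finset.sum_nonpos fun i hi => Finset.sum_nonpos fun j hj =>
      mul_nonpos_of_nonneg_of_nonpos (mul_nonneg (hw i hi) (hw j hj))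
        (hfg.sub_mul_sub_nonpos hi hj)
  linarith

theorem Antivary.tsum_mul_tsum_le_tsum_mul_tsum {ι : Type*} {w f g : ι → ℝ}
    (hfg : Antivary f g) (hw : ∀ i, 0 ≤ w i) (h₁ : Summable w)
    (h₂ : Summable fun i => w i * f i) (h₃ : Summable fun i => w i * g i)
    (h₄ : Summable fun i => w i * f i * g i) :
    (∑' i, w i) * ∑' i, w i * f i * g i ≤ (∑' i, w i * f i) * ∑' i, w i * g i :=
  le_of_tendsto_of_tendsto' (Filter.Tendsto.mul h₁.hasSum h₄.hasSum)
    (Filter.Tendsto.mul h₂.hasSum h₃.hasSum)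
    fun _ => (hfg.antivaryOn _).sum_mul_sum_le_sum_mul_sum fun i _ => hw i

lemma tsum_le_of_le_sub_succ {f g : ℕ → ℝ} (hf : ∀ n, 0 ≤ f n) (hg : ∀ n, 0 ≤ g n)
    (hfg : ∀ n, f n ≤ g n - g (n + 1)) : ∑' n, f n ≤ g 0 :=
  Real.tsum_le_of_sum_range_le hf fun N => calc
    ∑ n ∈ Finset.range N, f n ≤ ∑ n ∈ Finset.range N, (g n - g (n + 1)) :=
      Finset.sum_le_sum fun n _ => hfg n
    _ = g 0 - g N := Finset.sum_range_sub' g N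
    _ ≤ g 0 := by linarith [hg N]

lemma summable_zetaR_term {q : ℝ} (hq : 1 < q) : Summable fun n : ℕ => ((n : ℝ) + 1) ^ (-q) := by
  simpa using (summable_nat_add_iff 1).2 (Real.summable_nat_rpow.2 (by linarith : -q < -1))

lemma summable_zetaR_term_mul_of_le {q C : ℝ} (hq : 1 < q) {f : ℕ → ℝ} (hf : ∀ n, 0 ≤ f n)
    (hfC : ∀ n, f n ≤ C) : Summable fun n : ℕ => ((n : ℝ) + 1) ^ (-q) * f n :=
  ((summable_zetaR_term hq).mul_right C).of_nonneg_of_le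
    (fun n => mul_nonneg (by positivity) (hf n))
    fun n => mul_le_mul_of_nonneg_left (hfC n) (by positivity)

lemma zetaR_eq_one_add {q : ℝ} (hq : 1 < q) :
    zetaR q = 1 + ∑' n : ℕ, ((n : ℝ) + 2) ^ (-q) := by
  rw [zetaR, (summable_zetaR_term hq).tsum_eq_zero_add]
  norm_num [add_assoc, one_add_one_eq_two]

lemma one_le_zetaR {q : ℝ} (hq : 1 < q) : 1 ≤ zetaR q := by
  rw [zetaR_eq_one_add hq]
  exact le_add_of_nonneg_right (tsum_nonneg fun n => by positivity)

lemma zetaR_sub_one_le {q : ℝ} (hq : 2 ≤ q) : zetaR q - 1 ≤ 2 ^ (2 - q) := by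
  rw [zetaR_eq_one_add (by linarith), add_sub_cancel_left]
  refine (tsum_le_of_le_sub_succ (f := fun n : ℕ => ((n : ℝ) + 2) ^ (-q))
    (g := fun n : ℕ => 2 ^ (2 - q) / ((n : ℝ) + 1))
    (fun n => by positivity) (fun n => by positivity) fun n => ?_).trans_eq (by simp)
  have hν : (0 : ℝ) < n + 2 := by positivity
  calc ((n : ℝ) + 2) ^ (-q) = ((n : ℝ) + 2) ^ (2 - q) / ((n : ℝ) + 2) ^ 2 := by
        rw [show -q = (2 - q) - 2 by ring, rpow_sub hν, rpow_two]
    _ ≤ 2 ^ (2 - q) / (((n : ℝ) + 1) * ((n : ℝ) + 2)) := by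
        have hn : (0 : ℝ) ≤ n := n.cast_nonneg
        exact div_le_div₀ (by positivity) (rpow_le_rpow_of_nonpos two_pos (by linarith)
          (by linarith)) (by positivity) (by nlinarith)
    _ = 2 ^ (2 - q) / ((n : ℝ) + 1) - 2 ^ (2 - q) / (((n + 1 : ℕ) : ℝ) + 1) := by
        push_cast; field_simp; ring

lemma zetaR_two_mul_add_three_le {μ : ℝ} (hμ : 0 ≤ μ) :
    zetaR (2 * μ + 3) ≤ 2 ^ (1 / (μ + 1)) := by
  have hgrowth : μ + 1 ≤ 2 ^ (2 * μ) := by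
    have := one_add_mul_one_sub_inv_le_rpow two_pos (by positivity : 0 ≤ 2 * μ)
    linarith
  have hγ := one_add_mul_one_sub_inv_le_rpow two_pos (by positivity : 0 ≤ 1 / (μ + 1))
  have htail : zetaR (2 * μ + 3) - 1 ≤ 1 / (μ + 1) * (1 - 2⁻¹) := calc
    zetaR (2 * μ + 3) - 1 ≤ 2 ^ (2 - (2 * μ + 3)) := zetaR_sub_one_le (by linarith)
    _ = 1 / (2 * 2 ^ (2 * μ)) := by
        rw [show 2 - (2 * μ + 3) = -(1 + 2 * μ) by ring, rpow_neg two_pos.le,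
          rpow_add two_pos, rpow_one, one_div]
    _ ≤ 1 / (μ + 1) * (1 - 2⁻¹) := by
        rw [div_mul_eq_mul_div, div_le_div_iff₀ (by positivity) (by positivity)]
        nlinarith
  linarith

noncomputable def mathieuRatio (μ r : ℝ) (n : ℕ) : ℝ :=
  2 * (((n : ℝ) + 1) ^ 2 / (((n : ℝ) + 1) ^ 2 + r ^ 2)) ^ (μ + 1)

section Mathieu

variable {μ : ℝ} (r : ℝ)

lemma mathieuRatio_nonneg (n : ℕ) : 0 ≤ mathieuRatio μ r n := by
  unfold mathieuRatio; positivity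

lemma mathieuRatio_le_two (hμ : -1 ≤ μ) (n : ℕ) : mathieuRatio μ r n ≤ 2 := by
  unfold mathieuRatio
  have hbase : ((n : ℝ) + 1) ^ 2 / (((n : ℝ) + 1) ^ 2 + r ^ 2) ≤ 1 :=
    div_le_one_of_le₀ (by nlinarith [sq_nonneg r]) (by positivity)
  nlinarith [rpow_le_one (by positivity) hbase (by linarith : 0 ≤ μ + 1)]

lemma mathieuRatio_zero : mathieuRatio μ r 0 = 2 * ((1 + r ^ 2)⁻¹) ^ (μ + 1) := by
  simp [mathieuRatio]

lemma monotone_mathieuRatio (hμ : -1 ≤ μ) : Monotone (mathieuRatio μ r) := by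
  intro m n hmn
  have hmn' : (m : ℝ) + 1 ≤ n + 1 := by exact_mod_cast Nat.succ_le_succ hmn
  refine mul_le_mul_of_nonneg_left (rpow_le_rpow (by positivity) ?_ (by linarith)) zero_le_two
  rw [div_le_div_iff₀ (by positivity) (by positivity)]
  nlinarith [mul_le_mul_of_nonneg_right (pow_le_pow_left₀ (by positivity) hmn' 2) (sq_nonneg r)]

lemma antitone_inv_sq_add_sq : Antitone fun n : ℕ => (((n : ℝ) + 1) ^ 2 + r ^ 2)⁻¹ := by
  intro m n hmn
  have hmn' : (m : ℝ) + 1 ≤ n + 1 := by exact_mod_cast Nat.succ_le_succ hmn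
  dsimp only
  gcongr

lemma mathieuS_term_eq (n : ℕ) :
    2 * ((n : ℝ) + 1) / (((n : ℝ) + 1) ^ 2 + r ^ 2) ^ (μ + 1) =
      ((n : ℝ) + 1) ^ (-(2 * μ + 1)) * mathieuRatio μ r n := by
  have hν : (0 : ℝ) < n + 1 := by positivity
  have hpow : (((n : ℝ) + 1) ^ 2) ^ (μ + 1) = ((n : ℝ) + 1) * ((n : ℝ) + 1) ^ (2 * μ + 1) := by
    rw [← rpow_natCast, ← rpow_mul hν.le,
      show (2 : ℕ) * (μ + 1) = 1 + (2 * μ + 1) by push_cast; ring, rpow_add hν, rpow_one]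
  rw [mathieuRatio, div_rpow (by positivity) (by positivity), hpow, rpow_neg hν.le]
  field_simp

lemma mathieuS_eq_tsum :
    mathieuS μ r = ∑' n : ℕ, ((n : ℝ) + 1) ^ (-(2 * μ + 1)) * mathieuRatio μ r n :=
  tsum_congr (mathieuS_term_eq r)

lemma mathieuS_add_one_eq_tsum :
    mathieuS (μ + 1) r = ∑' n : ℕ, ((n : ℝ) + 1) ^ (-(2 * μ + 1)) * mathieuRatio μ r n *
      (((n : ℝ) + 1) ^ 2 + r ^ 2)⁻¹ := by
  refine tsum_congr fun n => ?_
  rw [rpow_add_one (by positivity), ← div_div, mathieuS_term_eq, div_eq_mul_inv]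

lemma inv_sq_add_sq_le_one (n : ℕ) : (((n : ℝ) + 1) ^ 2 + r ^ 2)⁻¹ ≤ 1 :=
  inv_le_one_of_one_le₀ (by nlinarith [sq_nonneg r, (n.cast_nonneg : (0 : ℝ) ≤ n)])

lemma zetaR_mul_mathieuRatio_zero_le (hμ : 0 < μ) :
    zetaR (2 * μ + 1) * mathieuRatio μ r 0 ≤ mathieuS μ r := by
  rw [mathieuS_eq_tsum, zetaR, ← tsum_mul_right]
  exact Summable.tsum_le_tsum
    (fun n => mul_le_mul_of_nonneg_left (monotone_mathieuRatio r (by linarith) n.zero_le)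
      (by positivity))
    ((summable_zetaR_term (by linarith)).mul_right _)
    (summable_zetaR_term_mul_of_le (by linarith) (mathieuRatio_nonneg r)
      (mathieuRatio_le_two r (by linarith)))

lemma tsum_zetaR_term_mul_inv_le (hμ : 0 < μ) :
    ∑' n : ℕ, ((n : ℝ) + 1) ^ (-(2 * μ + 1)) * (((n : ℝ) + 1) ^ 2 + r ^ 2)⁻¹ ≤
      (1 + r ^ 2)⁻¹ + (zetaR (2 * μ + 3) - 1) := by
  have hsum := summable_zetaR_term_mul_of_le (by linarith : 1 < 2 * μ + 1)
    (fun n => by positivity) (inv_sq_add_sq_le_one r)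
  rw [hsum.tsum_eq_zero_add, zetaR_eq_one_add (by linarith), add_sub_cancel_left]
  refine add_le_add (by simp) (Summable.tsum_le_tsum (fun n => ?_)
    ((summable_nat_add_iff 1).2 hsum) ?_)
  · have hν : (0 : ℝ) < n + 2 := by positivity
    calc (((n + 1 : ℕ) : ℝ) + 1) ^ (-(2 * μ + 1)) * ((((n + 1 : ℕ) : ℝ) + 1) ^ 2 + r ^ 2)⁻¹
        = ((n : ℝ) + 2) ^ (-(2 * μ + 1)) * (((n : ℝ) + 2) ^ 2 + r ^ 2)⁻¹ := by
          push_cast; ring_nf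
      _ ≤ ((n : ℝ) + 2) ^ (-(2 * μ + 1)) * (((n : ℝ) + 2) ^ 2)⁻¹ := by
          gcongr; nlinarith [sq_nonneg r]
      _ = ((n : ℝ) + 2) ^ (-(2 * μ + 3)) := by
          rw [show -(2 * μ + 3) = -(2 * μ + 1) + -2 by ring, rpow_add hν, rpow_neg hν.le 2,
            rpow_two]
  · simpa [add_assoc, one_add_one_eq_two] using
      (summable_nat_add_iff 1).2 (summable_zetaR_term (by linarith : 1 < 2 * μ + 3))

lemma zetaR_mul_mathieuS_add_one_le (hμ : 0 < μ) :
    zetaR (2 * μ + 1) * mathieuS (μ + 1) r ≤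
      mathieuS μ r * ∑' n : ℕ, ((n : ℝ) + 1) ^ (-(2 * μ + 1)) * (((n : ℝ) + 1) ^ 2 + r ^ 2)⁻¹ := by
  have hq : 1 < 2 * μ + 1 := by linarith
  rw [mathieuS_add_one_eq_tsum, mathieuS_eq_tsum, zetaR]
  have hle : ∀ n, mathieuRatio μ r n ≤ 2 := mathieuRatio_le_two r (by linarith)
  have hprod := summable_zetaR_term_mul_of_le hq
    (fun n => mul_nonneg (mathieuRatio_nonneg r n) (by positivity))
    (fun n => (mul_le_of_le_one_right (mathieuRatio_nonneg r n) (inv_sq_add_sq_le_one r n)).trans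
      (hle n))
  exact ((monotone_mathieuRatio r (by linarith)).antivary
    (antitone_inv_sq_add_sq r)).tsum_mul_tsum_le_tsum_mul_tsum
    (fun n => by positivity) (summable_zetaR_term hq)
    (summable_zetaR_term_mul_of_le hq (mathieuRatio_nonneg r) hle)
    (summable_zetaR_term_mul_of_le hq (fun n => by positivity) (inv_sq_add_sq_le_one r))
    (hprod.congr fun n => (mul_assoc _ _ _).symm)

lemma mathieuS_pos (hμ : 0 < μ) : 0 < mathieuS μ r :=
  (mul_pos (one_pos.trans_le (one_le_zetaR (by linarith)))
    (by rw [mathieuRatio_zero]; positivity)).trans_le (zetaR_mul_mathieuRatio_zero_le r hμ)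

lemma two_rpow_mul_inv_le_rpow_mathieuS_div (hμ : 0 < μ) :
    2 ^ (1 / (μ + 1)) * (1 + r ^ 2)⁻¹ ≤ (mathieuS μ r / zetaR (2 * μ + 1)) ^ (1 / (μ + 1)) := by
  have hS := zetaR_mul_mathieuRatio_zero_le r hμ
  rw [mathieuRatio_zero] at hS
  calc 2 ^ (1 / (μ + 1)) * (1 + r ^ 2)⁻¹ = (2 * ((1 + r ^ 2)⁻¹) ^ (μ + 1)) ^ (1 / (μ + 1)) := by
        rw [mul_rpow zero_le_two (by positivity), ← rpow_mul (by positivity),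
          mul_one_div_cancel (by linarith), rpow_one]
    _ ≤ _ := by
        gcongr
        rw [le_div_iff₀ (one_pos.trans_le (one_le_zetaR (by linarith)))]
        linarith

lemma zetaR_div_le_zetaR_mul_mathieuS_div (hμ : 0 < μ) :
    zetaR (2 * μ + 3) / ((1 + r ^ 2)⁻¹ + (zetaR (2 * μ + 3) - 1)) ≤
      zetaR (2 * μ + 3) * mathieuS μ r / (zetaR (2 * μ + 1) * mathieuS (μ + 1) r) := by
  have hS := mathieuS_pos r hμ
  have hcheb := (zetaR_mul_mathieuS_add_one_le r hμ).trans
    (mul_le_mul_of_nonneg_left (tsum_zetaR_term_mul_inv_le r hμ) hS.le)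
  have hS₁ := mathieuS_pos r (by linarith : 0 < μ + 1)
  have hζ₁ := one_le_zetaR (by linarith : 1 < 2 * μ + 1)
  have hζ₃ := one_le_zetaR (by linarith : 1 < 2 * μ + 3)
  rw [div_le_div_iff₀ (by positivity) (by positivity)]
  nlinarith

end Mathieu

theorem stmt6_general (r μ : ℝ) (hμ : 0 < μ) :
    (mathieuS μ r / zetaR (2 * μ + 1)) ^ (1 / (μ + 1)) +
      zetaR (2 * μ + 3) * mathieuS μ r / (zetaR (2 * μ + 1) * mathieuS (μ + 1) r) ≥ 2 := by
  set t := (1 + r ^ 2)⁻¹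
  set e := zetaR (2 * μ + 3) - 1 with he
  have he₀ : 0 ≤ e := sub_nonneg.2 (one_le_zetaR (by linarith))
  have hζ₃ : zetaR (2 * μ + 3) ≤ 2 ^ (1 / (μ + 1)) := zetaR_two_mul_add_three_le hμ.le
  have he₁ : e ≤ 1 := by
    have : (2 : ℝ) ^ (1 / (μ + 1)) ≤ 2 ^ (1 : ℝ) :=
      rpow_le_rpow_of_exponent_le one_le_two (by rw [div_le_one (by linarith)]; linarith)
    linarith [rpow_one (2 : ℝ)]
  calc (2 : ℝ) ≤ (1 + e) * (t + (t + e)⁻¹) := two_le_one_add_mul_add_inv he₀ he₁ (by positivity)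
    _ = (1 + e) * t + (1 + e) / (t + e) := by ring
    _ ≤ 2 ^ (1 / (μ + 1)) * t + zetaR (2 * μ + 3) / (t + e) := by
        rw [he, add_sub_cancel]; gcongr
    _ ≤ _ := add_le_add (two_rpow_mul_inv_le_rpow_mathieuS_div r hμ)
        (zetaR_div_le_zetaR_mul_mathieuS_div r hμ)

theorem stmt6 (r μ : ℝ) (hr : 0 < r) (hμ : 0 < μ) :
    (mathieuS μ r / zetaR (2 * μ + 1)) ^ (1 / (μ + 1)) +
      zetaR (2 * μ + 3) * mathieuS μ r / (zetaR (2 * μ + 1) * mathieuS (μ + 1) r) ≥ 2 :=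
  stmt6_general r μ hμ
end

section
/- For every μ > 0, the derivative of the generalized Mathieu series with respect to r satisfies d/dr S_μ(r) = −2r(μ+1)·S_{μ+1}(r) for all r > 0. -/
open Real

/-!
Differentiate term by term. The derivative of `2c / (c² + t²)^(μ+1)` in `t` is `-2t(μ+1)` times
the corresponding term of `S_{μ+1}`, and since `2c|t| ≤ c² + t²` it is bounded, uniformly in `t`,
by `2(μ+1) c^(-(2μ+2))`, which is summable over `c = n + 1`.
-/

lemma summable_nat_add_one_rpow_neg {s : ℝ} (hs : 1 < s) :
    Summable fun n : ℕ => ((n : ℝ) + 1) ^ (-s) := by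
  have h := (summable_nat_add_iff 1).2 (Real.summable_nat_rpow.2 (neg_lt_neg hs))
  exact_mod_cast h

noncomputable def mathieuTerm (μ c t : ℝ) : ℝ := 2 * c / (c ^ 2 + t ^ 2) ^ (μ + 1)

lemma mathieuS_eq_tsum_mathieuTerm (μ r : ℝ) :
    mathieuS μ r = ∑' n : ℕ, mathieuTerm μ (n + 1) r := rfl

lemma mathieuTerm_eq_mul_rpow_neg (μ : ℝ) {c : ℝ} (hc : c ≠ 0) (t : ℝ) :
    mathieuTerm μ c t = 2 * c * (c ^ 2 + t ^ 2) ^ (-(μ + 1)) := by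
  rw [mathieuTerm, rpow_neg (by positivity), div_eq_mul_inv]

lemma hasDerivAt_mathieuTerm (μ : ℝ) {c : ℝ} (hc : c ≠ 0) (t : ℝ) :
    HasDerivAt (mathieuTerm μ c) (-2 * t * (μ + 1) * mathieuTerm (μ + 1) c t) t := by
  have hA : c ^ 2 + t ^ 2 ≠ 0 := by positivity
  have h := (((hasDerivAt_pow 2 t).const_add (c ^ 2)).rpow_const (p := -(μ + 1))
    (Or.inl hA)).const_mul (2 * c)
  rw [funext (mathieuTerm_eq_mul_rpow_neg μ hc), mathieuTerm_eq_mul_rpow_neg _ hc]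
  refine h.congr_deriv ?_
  rw [show -(μ + 1) - 1 = -(μ + 1 + 1) by ring]
  push_cast
  ring

lemma mathieuTerm_le (t : ℝ) {μ c : ℝ} (hμ : -1 ≤ μ) (hc : 0 < c) :
    mathieuTerm μ c t ≤ 2 * c ^ (-(2 * μ + 1)) := by
  have hpow : (c ^ 2) ^ (μ + 1) ≤ (c ^ 2 + t ^ 2) ^ (μ + 1) :=
    rpow_le_rpow (by positivity) (by nlinarith) (by linarith)
  calc mathieuTerm μ c t ≤ 2 * c / (c ^ 2) ^ (μ + 1) :=
        div_le_div_of_nonneg_left (by positivity) (by positivity) hpow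
    _ = 2 * c ^ (-(2 * μ + 1)) := by
        rw [← rpow_natCast, ← rpow_mul hc.le, show -(2 * μ + 1) = 1 - (2 : ℕ) * (μ + 1) by
          push_cast; ring, rpow_sub hc, rpow_one, mul_div_assoc]

lemma abs_mul_mathieuTerm_add_one_le (μ : ℝ) {c : ℝ} (hc : 0 < c) (t : ℝ) :
    |t| * mathieuTerm (μ + 1) c t ≤ mathieuTerm μ c t / (2 * c) := by
  have hA : 0 < c ^ 2 + t ^ 2 := by positivity
  have hP : 0 < (c ^ 2 + t ^ 2) ^ (μ + 1) := by positivity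
  have hamgm : 2 * c * |t| ≤ c ^ 2 + t ^ 2 := by
    nlinarith [sq_nonneg (c - |t|), sq_abs t]
  rw [mathieuTerm, mathieuTerm, rpow_add hA, rpow_one, div_div_cancel_left' (by positivity),
    mul_div_assoc', div_le_iff₀ (by positivity), inv_mul_cancel_left₀ hP.ne']
  linarith

lemma norm_deriv_mathieuTerm_le (t : ℝ) {μ c : ℝ} (hμ : -1 ≤ μ) (hc : 0 < c) :
    ‖-2 * t * (μ + 1) * mathieuTerm (μ + 1) c t‖ ≤ 2 * (μ + 1) * c ^ (-(2 * μ + 2)) := by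
  have hterm : 0 ≤ mathieuTerm (μ + 1) c t := by unfold mathieuTerm; positivity
  calc ‖-2 * t * (μ + 1) * mathieuTerm (μ + 1) c t‖
      = 2 * (μ + 1) * (|t| * mathieuTerm (μ + 1) c t) := by
        rw [norm_mul, norm_mul, norm_mul, Real.norm_of_nonneg hterm,
          Real.norm_of_nonneg (by linarith : 0 ≤ μ + 1)]
        simp only [norm_neg, Real.norm_ofNat, norm_eq_abs]
        ring
    _ ≤ 2 * (μ + 1) * (mathieuTerm μ c t / (2 * c)) := by
        gcongr
        · linarith
        · exact abs_mul_mathieuTerm_add_one_le μ hc t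
    _ ≤ 2 * (μ + 1) * (2 * c ^ (-(2 * μ + 1)) / (2 * c)) := by
        gcongr
        · linarith
        · exact mathieuTerm_le t hμ hc
    _ = 2 * (μ + 1) * c ^ (-(2 * μ + 2)) := by
        rw [show -(2 * μ + 2) = -(2 * μ + 1) - 1 by ring, rpow_sub_one hc.ne',
          mul_div_mul_left _ _ two_ne_zero]

lemma summable_mathieuTerm {μ : ℝ} (hμ : 0 < μ) (t : ℝ) :
    Summable fun n : ℕ => mathieuTerm μ (n + 1) t :=
  ((summable_nat_add_one_rpow_neg (by linarith : 1 < 2 * μ + 1)).mul_left 2).of_nonneg_of_le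
    (fun n => by unfold mathieuTerm; positivity)
    (fun n => mathieuTerm_le t (by linarith) n.cast_add_one_pos)

theorem stmt8_general (μ r : ℝ) (hμ : 0 < μ) :
    HasDerivAt (fun t => mathieuS μ t) (-2 * r * (μ + 1) * mathieuS (μ + 1) r) r := by
  have hc (n : ℕ) : (0 : ℝ) < n + 1 := n.cast_add_one_pos
  have hbound : Summable fun n : ℕ => 2 * (μ + 1) * ((n : ℝ) + 1) ^ (-(2 * μ + 2)) :=
    (summable_nat_add_one_rpow_neg (by linarith)).mul_left _
  have h := hasDerivAt_tsum hbound (fun n => hasDerivAt_mathieuTerm μ (hc n).ne')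
    (fun n t => norm_deriv_mathieuTerm_le t (by linarith) (hc n)) (summable_mathieuTerm hμ r) r
  simpa only [mathieuS_eq_tsum_mathieuTerm, tsum_mul_left] using h

theorem stmt8 (μ r : ℝ) (hμ : 0 < μ) (hr : 0 < r) :
    HasDerivAt (fun t => mathieuS μ t) (-2 * r * (μ + 1) * mathieuS (μ + 1) r) r :=
  stmt8_general μ r hμ
end
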